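/- If G is a connected unicyclic graph on n vertices with α(G) + μ(G) = n − 1 and unique cycle C, then core(G) = ⋃_{x ∈ N₁(C)} core(T_x), where the union is over vertices x outside C adjacent to C and T_x is the tree component of G minus the edge joining x to C that contains x. -/

import Mathlib

/-- A set of vertices is independent if no two of its vertices are adjacent. -/
def SimpleGraph.IsIndepSet' {V : Type*} (G : SimpleGraph V) (s : Set V) : Prop :=
  s.Pairwise (fun a b => ¬ G.Adj a b)

/-- The independence number: the maximum cardinality of an independent set. -/
noncomputable def indepNum {V : Type*} (G : SimpleGraph V) : ℕ :=
  sSup {n | ∃ s : Set V, G.IsIndepSet' s ∧ s.ncard = n}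

/-- The matching number: the maximum cardinality of a matching. -/
noncomputable def matchNum {V : Type*} (G : SimpleGraph V) : ℕ :=
  sSup {n | ∃ M : SimpleGraph.Subgraph G, M.IsMatching ∧ M.edgeSet.ncard = n}

/-- A maximum independent set. -/
def IsMaxIndepSet {V : Type*} (G : SimpleGraph V) (s : Set V) : Prop :=
  G.IsIndepSet' s ∧ s.ncard = indepNum G

/-- The core: intersection of all maximum independent sets. -/
noncomputable def core {V : Type*} (G : SimpleGraph V) : Set V :=
  ⋂₀ {s | IsMaxIndepSet G s}

/-- Open neighborhood of a set. -/
def nbhdSet {V : Type*} (G : SimpleGraph V) (s : Set V) : Set V :=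
  {v | ∃ w ∈ s, G.Adj v w}

/-- Closed neighborhood of a set. -/
def closedNbhdSet {V : Type*} (G : SimpleGraph V) (s : Set V) : Set V :=
  s ∪ nbhdSet G s

/-- The tree component of `G - xy` containing `x`. -/
noncomputable def treeComp {V : Type*} (G : SimpleGraph V) (x y : V) :
    SimpleGraph ((G.deleteEdges {s(x,y)}).connectedComponentMk x).supp :=
  (G.deleteEdges {s(x,y)}).induce ((G.deleteEdges {s(x,y)}).connectedComponentMk x).supp

/-!
Write `α(A)` for the independence number of `G` restricted to `A` and `μ` for the matching number.
If `A` induces a forest then `|A| ≤ α(A) + μ`: remove a leaf together with its neighbour, which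
adds one vertex to an independent set and one edge to a matching. For `w` on the cycle `C`,
`G - w` is a forest, so `α + μ = n - 1` yields a maximum independent set of `G` avoiding `w`.
For `x ∉ C` adjacent to `y ∈ C`, the edge `xy` is a bridge; if `T` is the side of `x`, then
`T - x` and `Tᶜ - y` are forests whose matchings glue along `xy`, whence
`α ≤ α(T - x) + α(Tᶜ - y)`. As `xy` is the only edge leaving `T`, this makes the maximum
independent sets of `G` restrict to maximum independent sets of `T`, and every maximum
independent set of `T` extend to one of `G`; hence `core(G) ∩ T = core(T)`. Every vertex off `C`
lies in such a `T`.
-/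

namespace UnicyclicCore

open Set
open SimpleGraph hiding indepNum

variable {V : Type*} (G : SimpleGraph V)

-- Independence number, maximum independent sets and core of the subgraph induced on `A`, kept on
-- the ambient vertex type so that different vertex sets can be compared without subtypes.
noncomputable def indepNumOn (A : Set V) : ℕ :=
  sSup {n | ∃ s ⊆ A, G.IsIndepSet' s ∧ s.ncard = n}

def IsMaxIndepSetOn (A s : Set V) : Prop :=
  s ⊆ A ∧ G.IsIndepSet' s ∧ s.ncard = indepNumOn G A

def coreOn (A : Set V) : Set V :=
  {w | w ∈ A ∧ ∀ s, IsMaxIndepSetOn G A s → w ∈ s}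

variable {G} {A B s : Set V}

section IndepNumOn

variable [Finite V]

lemma bddAbove_indepNumOn :
    BddAbove {n | ∃ s ⊆ A, G.IsIndepSet' s ∧ s.ncard = n} :=
  ⟨Nat.card V, by rintro _ ⟨s, -, -, rfl⟩; exact s.ncard_le_card⟩

lemma ncard_le_indepNumOn (hsA : s ⊆ A) (hs : G.IsIndepSet' s) : s.ncard ≤ indepNumOn G A :=
  le_csSup bddAbove_indepNumOn ⟨s, hsA, hs, rfl⟩

lemma exists_isMaxIndepSetOn (G : SimpleGraph V) (A : Set V) : ∃ s, IsMaxIndepSetOn G A s := by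
  obtain ⟨s, hsA, hs, hcard⟩ :=
    Nat.sSup_mem (s := {n | ∃ s ⊆ A, G.IsIndepSet' s ∧ s.ncard = n})
      ⟨0, ∅, empty_subset A, pairwise_empty _, ncard_empty V⟩ bddAbove_indepNumOn
  exact ⟨s, hsA, hs, hcard⟩

lemma indepNumOn_mono (h : A ⊆ B) : indepNumOn G A ≤ indepNumOn G B := by
  obtain ⟨s, hsA, hs, hcard⟩ := exists_isMaxIndepSetOn G A
  exact hcard ▸ ncard_le_indepNumOn (hsA.trans h) hs

lemma isMaxIndepSetOn_of_le (hsA : s ⊆ A) (hs : G.IsIndepSet' s)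
    (h : indepNumOn G A ≤ s.ncard) : IsMaxIndepSetOn G A s :=
  ⟨hsA, hs, (ncard_le_indepNumOn hsA hs).antisymm h⟩

lemma indepNumOn_add_one_le {u : V} (hu : u ∉ B) (hB : ∀ z ∈ B, ¬G.Adj u z) :
    indepNumOn G B + 1 ≤ indepNumOn G (insert u B) := by
  obtain ⟨s, hsB, hs, hcard⟩ := exists_isMaxIndepSetOn G B
  have hins : G.IsIndepSet' (insert u s) :=
    hs.insert fun z hz _ => ⟨hB z (hsB hz), fun h => hB z (hsB hz) h.symm⟩
  rw [← hcard, ← ncard_insert_of_notMem (fun h => hu (hsB h))]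
  exact ncard_le_indepNumOn (insert_subset_insert hsB) hins

lemma IsMaxIndepSetOn.inter (hs : IsMaxIndepSetOn G univ s) (T : Set V)
    (h : indepNumOn G T + indepNumOn G Tᶜ ≤ indepNumOn G univ) :
    IsMaxIndepSetOn G T (s ∩ T) := by
  refine isMaxIndepSetOn_of_le inter_subset_right (hs.2.1.mono inter_subset_left) ?_
  have hout : (s \ T).ncard ≤ indepNumOn G Tᶜ :=
    ncard_le_indepNumOn (fun _ hz => hz.2) (hs.2.1.mono sdiff_subset)
  have hsplit := ncard_inter_add_ncard_sdiff_eq_ncard s T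
  have := hs.2.2
  omega

end IndepNumOn

lemma indepNum_eq_indepNumOn_univ : indepNum G = indepNumOn G univ := by
  simp [indepNum, indepNumOn]

lemma core_eq_coreOn_univ : core G = coreOn G univ := by
  ext w
  simp [core, coreOn, IsMaxIndepSet, IsMaxIndepSetOn, indepNum_eq_indepNumOn_univ]

lemma isIndepSet'_induce_iff {t : Set A} :
    (G.induce A).IsIndepSet' t ↔ G.IsIndepSet' (Subtype.val '' t) :=
  (Subtype.val_injective.injOn.pairwise_image (r := fun a b => ¬G.Adj a b)).symm

lemma indepNum_induce : indepNum (G.induce A) = indepNumOn G A := by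
  unfold indepNum indepNumOn
  congr 1
  ext n
  rw [mem_ofPred_eq, mem_ofPred_eq,
    ← Subtype.exists_set_subtype (fun s => G.IsIndepSet' s ∧ s.ncard = n)]
  simp only [isIndepSet'_induce_iff, ncard_image_of_injective _ Subtype.val_injective]

lemma isMaxIndepSet_induce_iff {t : Set A} :
    IsMaxIndepSet (G.induce A) t ↔ IsMaxIndepSetOn G A (Subtype.val '' t) := by
  simp only [IsMaxIndepSet, IsMaxIndepSetOn, isIndepSet'_induce_iff, indepNum_induce,
    ncard_image_of_injective _ Subtype.val_injective, Subtype.coe_image_subset, true_and]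

lemma image_core_induce : Subtype.val '' core (G.induce A) = coreOn G A := by
  ext w
  constructor
  · rintro ⟨w, hw, rfl⟩
    refine ⟨w.2, fun s hs => ?_⟩
    have hs' : IsMaxIndepSetOn G A (Subtype.val '' (Subtype.val ⁻¹' s : Set A)) := by
      rwa [Subtype.image_preimage_coe, inter_eq_right.mpr hs.1]
    exact hw _ (isMaxIndepSet_induce_iff.mpr hs')
  · rintro ⟨hwA, hw⟩
    refine ⟨⟨w, hwA⟩, fun t ht => ?_, rfl⟩
    obtain ⟨w', hw't, rfl⟩ := hw _ (isMaxIndepSet_induce_iff.mp ht)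
    exact hw't

section Forest

lemma isMatching_sup {M M' : G.Subgraph} (hM : M.IsMatching) (hM' : M'.IsMatching)
    (hd : Disjoint M.verts M'.verts) : (M ⊔ M').IsMatching :=
  hM.sup hM' (by rwa [hM.support_eq_verts, hM'.support_eq_verts])

variable [Finite V]

lemma le_matchNum {M : G.Subgraph} (hM : M.IsMatching) : M.edgeSet.ncard ≤ matchNum G :=
  le_csSup ⟨Nat.card (Sym2 V), by rintro _ ⟨M, -, rfl⟩; exact M.edgeSet.ncard_le_card⟩ ⟨M, hM, rfl⟩

lemma ncard_edgeSet_sup {M M' : G.Subgraph} (hd : Disjoint M.verts M'.verts) :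
    (M ⊔ M').edgeSet.ncard = M.edgeSet.ncard + M'.edgeSet.ncard := by
  refine Subgraph.edgeSet_sup ▸ ncard_union_eq (disjoint_left.mpr fun e he he' => ?_)
  induction e with
  | h a b =>
    exact disjoint_left.mp hd (M.mem_verts_of_mem_edge he (Sym2.mem_mk_left a b))
      (M'.mem_verts_of_mem_edge he' (Sym2.mem_mk_left a b))

-- The first vertex of a longest path is a leaf.
lemma exists_existsUnique_adj_of_isAcyclic {H : SimpleGraph V} (hH : H.IsAcyclic) {a b : V}
    (hab : H.Adj a b) : ∃ u, ∃! w, H.Adj u w := by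
  have : Nonempty V := ⟨a⟩
  obtain ⟨u, v, p, hp, hmax⟩ := Walk.exists_isPath_forall_isPath_length_le_length H
  have hnil : ¬p.Nil := fun hnil => by
    simpa [Walk.length_eq_zero_iff.mpr hnil] using
      hmax _ _ (Walk.cons hab .nil) (by simp [hab.ne])
  refine ⟨u, p.snd, p.adj_snd hnil, fun z hz => hH.eq_snd_of_adj_start hp hz ?_⟩
  by_contra hzp
  simpa using hmax _ _ (p.cons hz.symm) (hp.cons hzp)

lemma indepNumOn_sdiff_pair_add_one_le {u w : V} (hu : u ∈ A) (hw : ∀ z ∈ A, G.Adj u z → z = w) :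
    indepNumOn G (A \ {u, w}) + 1 ≤ indepNumOn G A := by
  refine (indepNumOn_add_one_le (by simp) fun z hz hadj => ?_).trans
    (indepNumOn_mono (insert_subset hu sdiff_subset))
  exact hz.2 (Or.inr (hw z hz.1 hadj))

theorem exists_isMatching_ncard_le (A : Set V) (hA : (G.induce A).IsAcyclic) :
    ∃ M : G.Subgraph, M.IsMatching ∧ M.verts ⊆ A ∧ A.ncard ≤ indepNumOn G A + M.edgeSet.ncard := by
  induction hn : A.ncard using Nat.strong_induction_on generalizing A with
  | _ n ih =>
  by_cases hE : ∃ a b : A, G.Adj a b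
  · obtain ⟨a, b, hab⟩ := hE
    obtain ⟨⟨u, hu⟩, ⟨w, hwA⟩, huw, hw⟩ :=
      exists_existsUnique_adj_of_isAcyclic hA (a := a) (b := b) hab
    replace huw : G.Adj u w := huw
    replace hw : ∀ z ∈ A, G.Adj u z → z = w :=
      fun z hz hadj => congrArg Subtype.val (hw ⟨z, hz⟩ hadj)
    set B := A \ {u, w}
    have hpair : {u, w} ⊆ A := insert_subset hu (singleton_subset_iff.mpr hwA)
    have hB : B.ncard + 2 = n := by
      rw [← hn, ← ncard_pair (G.ne_of_adj huw), ncard_sdiff hpair]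
      have := ncard_le_ncard hpair
      omega
    obtain ⟨M, hM, hMB, hcard⟩ :=
      ih B.ncard (by omega) B (hA.embedding (G.induceHomOfLE sdiff_subset)) rfl
    have hd : Disjoint M.verts (G.subgraphOfAdj huw).verts := by
      rw [subgraphOfAdj_verts]
      exact disjoint_sdiff_left.mono_left hMB
    refine ⟨M ⊔ G.subgraphOfAdj huw, isMatching_sup hM (.subgraphOfAdj huw) hd, ?_, ?_⟩
    · exact union_subset (hMB.trans sdiff_subset) hpair
    · have : indepNumOn G B + 1 ≤ indepNumOn G A := indepNumOn_sdiff_pair_add_one_le hu hw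
      rw [ncard_edgeSet_sup hd, edgeSet_subgraphOfAdj, ncard_singleton]
      omega
  · have hA' : G.IsIndepSet' A := fun a ha b hb _ hab => hE ⟨⟨a, ha⟩, ⟨b, hb⟩, hab⟩
    refine ⟨⊥, fun _ hv => hv.elim, empty_subset A, ?_⟩
    simpa [← hn] using ncard_le_indepNumOn subset_rfl hA'

lemma notMem_coreOn_univ_of_isAcyclic {w : V}
    (hαμ : indepNumOn G univ + matchNum G + 1 ≤ Nat.card V) (h : (G.induce {w}ᶜ).IsAcyclic) :
    w ∉ coreOn G univ := by
  obtain ⟨M, hM, -, hcard⟩ := exists_isMatching_ncard_le {w}ᶜ h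
  have hμ := le_matchNum hM
  have hn := ncard_compl_add_ncard {w}
  rw [ncard_singleton] at hn
  obtain ⟨s, hs⟩ := exists_isMaxIndepSetOn G {w}ᶜ
  have hs' : IsMaxIndepSetOn G univ s :=
    isMaxIndepSetOn_of_le (subset_univ s) hs.2.1 (by have := hs.2.2; omega)
  exact fun hw => hs.1 (hw.2 s hs') rfl

lemma indepNumOn_le_add_of_isAcyclic {T : Set V} {x y : V}
    (hαμ : indepNumOn G univ + matchNum G + 1 ≤ Nat.card V) (hxT : x ∈ T) (hyT : y ∉ T)
    (hxy : G.Adj x y) (h₁ : (G.induce (T \ {x})).IsAcyclic) (h₂ : (G.induce (Tᶜ \ {y})).IsAcyclic) :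
    indepNumOn G univ ≤ indepNumOn G (T \ {x}) + indepNumOn G (Tᶜ \ {y}) := by
  obtain ⟨M₁, hM₁, hM₁T, hc₁⟩ := exists_isMatching_ncard_le (T \ {x}) h₁
  obtain ⟨M₂, hM₂, hM₂T, hc₂⟩ := exists_isMatching_ncard_le (Tᶜ \ {y}) h₂
  have hd₁₂ : Disjoint M₁.verts M₂.verts :=
    disjoint_compl_right.mono (hM₁T.trans sdiff_subset) (hM₂T.trans sdiff_subset)
  have hd : Disjoint (M₁ ⊔ M₂).verts (G.subgraphOfAdj hxy).verts := by
    rw [subgraphOfAdj_verts, Subgraph.verts_sup, disjoint_insert_right,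
      disjoint_singleton_right]
    refine ⟨fun h => h.elim (fun h => (hM₁T h).2 rfl) (fun h => (hM₂T h).1 hxT),
      fun h => h.elim (fun h => hyT (hM₁T h).1) (fun h => (hM₂T h).2 rfl)⟩
  have hμ := le_matchNum (isMatching_sup (isMatching_sup hM₁ hM₂ hd₁₂) (.subgraphOfAdj hxy) hd)
  rw [ncard_edgeSet_sup hd, ncard_edgeSet_sup hd₁₂, edgeSet_subgraphOfAdj,
    ncard_singleton] at hμ
  have hx := ncard_sdiff_singleton_add_one hxT
  have hy := ncard_sdiff_singleton_add_one (s := Tᶜ) hyT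
  have hn := ncard_add_ncard_compl T
  omega

end Forest

section Bridge

variable {T : Set V} {x y : V}

lemma isIndepSet'_union (hcross : ∀ a ∈ T, ∀ b ∉ T, G.Adj a b → a = x ∧ b = y) {s₁ s₂ : Set V}
    (hs₁T : s₁ ⊆ T) (hs₂T : s₂ ⊆ Tᶜ) (hs₁ : G.IsIndepSet' s₁) (hs₂ : G.IsIndepSet' s₂)
    (hxy : x ∉ s₁ ∨ y ∉ s₂) : G.IsIndepSet' (s₁ ∪ s₂) := by
  have hnadj : ∀ a ∈ s₁, ∀ b ∈ s₂, ¬G.Adj a b := fun a ha b hb hab => by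
    obtain ⟨rfl, rfl⟩ := hcross a (hs₁T ha) b (hs₂T hb) hab
    tauto
  exact pairwise_union.mpr
    ⟨hs₁, hs₂, fun a ha b hb _ => ⟨hnadj a ha b hb, fun h => hnadj a ha b hb h.symm⟩⟩

variable [Finite V]

lemma indepNumOn_add_le (hcross : ∀ a ∈ T, ∀ b ∉ T, G.Adj a b → a = x ∧ b = y)
    (hAT : A ⊆ T) (hBT : B ⊆ Tᶜ) (hxy : x ∉ A ∨ y ∉ B) :
    indepNumOn G A + indepNumOn G B ≤ indepNumOn G univ := by
  obtain ⟨s₁, hs₁A, hs₁, hc₁⟩ := exists_isMaxIndepSetOn G A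
  obtain ⟨s₂, hs₂B, hs₂, hc₂⟩ := exists_isMaxIndepSetOn G B
  rw [← hc₁, ← hc₂, ← ncard_union_eq (disjoint_compl_right.mono (hs₁A.trans hAT) (hs₂B.trans hBT))]
  refine ncard_le_indepNumOn (subset_univ _)
    (isIndepSet'_union hcross (hs₁A.trans hAT) (hs₂B.trans hBT) hs₁ hs₂ ?_)
  exact hxy.imp (fun hx h => hx (hs₁A h)) (fun hy h => hy (hs₂B h))

theorem coreOn_univ_inter_eq (hcross : ∀ a ∈ T, ∀ b ∉ T, G.Adj a b → a = x ∧ b = y)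
    (h : indepNumOn G univ ≤ indepNumOn G (T \ {x}) + indepNumOn G (Tᶜ \ {y})) :
    coreOn G univ ∩ T = coreOn G T := by
  have hT : indepNumOn G univ ≤ indepNumOn G T + indepNumOn G (Tᶜ \ {y}) :=
    h.trans (Nat.add_le_add_right (indepNumOn_mono sdiff_subset) _)
  have h₁ := indepNumOn_add_le hcross (A := T \ {x}) (B := Tᶜ) sdiff_subset subset_rfl
    (.inl fun h => h.2 rfl)
  have h₂ := indepNumOn_add_le hcross (A := T) (B := Tᶜ \ {y}) subset_rfl sdiff_subset
    (.inr fun h => h.2 rfl)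
  have hsplit : indepNumOn G T + indepNumOn G Tᶜ ≤ indepNumOn G univ := by omega
  ext w
  constructor
  · rintro ⟨hw, hwT⟩
    refine ⟨hwT, fun s₁ hs₁ => ?_⟩
    obtain ⟨s₂, hs₂y, hs₂, hc₂⟩ := exists_isMaxIndepSetOn G (Tᶜ \ {y})
    have hs₂T : s₂ ⊆ Tᶜ := hs₂y.trans sdiff_subset
    have hunion : IsMaxIndepSetOn G univ (s₁ ∪ s₂) := by
      refine isMaxIndepSetOn_of_le (subset_univ _)
        (isIndepSet'_union hcross hs₁.1 hs₂T hs₁.2.1 hs₂ (.inr fun h => (hs₂y h).2 rfl)) ?_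
      rw [ncard_union_eq (disjoint_compl_right.mono hs₁.1 hs₂T), hs₁.2.2, hc₂]
      exact hT
    exact (hw.2 _ hunion).resolve_right fun hws₂ => hs₂T hws₂ hwT
  · rintro ⟨hwT, hw⟩
    exact ⟨⟨mem_univ w, fun s hs => (hw _ (hs.inter T hsplit)).1⟩, hwT⟩

end Bridge

section DeleteEdge

abbrev treeCompVerts (G : SimpleGraph V) (x y : V) : Set V :=
  ((G.deleteEdges {s(x, y)}).connectedComponentMk x).supp

variable {x y : V}

lemma notMem_treeCompVerts_of_isBridge (h : G.IsBridge s(x, y)) : y ∉ treeCompVerts G x y :=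
  fun hy => isBridge_iff.mp h (ConnectedComponent.eq.mp hy).symm

lemma eq_and_eq_of_adj_of_mem_treeCompVerts (hy : y ∉ treeCompVerts G x y) :
    ∀ a ∈ treeCompVerts G x y, ∀ b ∉ treeCompVerts G x y, G.Adj a b → a = x ∧ b = y := by
  intro a ha b hb hab
  by_cases he : s(a, b) = s(x, y)
  · rcases Sym2.eq_iff.mp he with hxy | ⟨rfl, -⟩
    · exact hxy
    · exact absurd ha hy
  · have hab' : (G.deleteEdges {s(x, y)}).Adj a b := deleteEdges_adj.mpr ⟨hab, he⟩
    exact absurd ((ConnectedComponent.mem_supp_congr_adj _ hab').mp ha) hb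

lemma treeComp_eq_induce (hy : y ∉ treeCompVerts G x y) :
    treeComp G x y = G.induce (treeCompVerts G x y) := by
  ext a b
  refine deleteEdges_adj.trans ⟨And.left, fun hab => ⟨hab, fun he => ?_⟩⟩
  rcases Sym2.eq_iff.mp he with ⟨-, hb⟩ | ⟨ha, -⟩
  · exact hy (hb.subst (motive := (· ∈ treeCompVerts G x y)) b.2)
  · exact hy (ha.subst (motive := (· ∈ treeCompVerts G x y)) a.2)

lemma exists_adj_reachable_deleteEdges (S : Set V) {a b : V} (p : G.Walk a b) (ha : a ∉ S)
    (hb : b ∈ S) : ∃ x ∉ S, ∃ y ∈ S, G.Adj x y ∧ (G.deleteEdges {s(x, y)}).Reachable a x := by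
  induction p with
  | nil => exact absurd hb ha
  | @cons a a' b h q ih =>
    by_cases ha' : a' ∈ S
    · exact ⟨a, ha, a', ha', h, .refl a⟩
    · obtain ⟨x, hx, y, hy, hxy, hreach⟩ := ih ha' hb
      have he : s(a, a') ≠ s(x, y) := fun he => by
        rcases Sym2.eq_iff.mp he with ⟨-, rfl⟩ | ⟨rfl, -⟩
        · exact ha' hy
        · exact ha hy
      exact ⟨x, hx, y, hy, hxy, (deleteEdges_adj.mpr ⟨h, he⟩).reachable.trans hreach⟩

end DeleteEdge

section Unicyclic

variable [Fintype V] {v : V} {c : G.Walk v v}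

-- Deleting an edge of `d` outside `c` would leave a tree that still contains the cycle `c`.
lemma edges_subset_of_isCycle (hconn : G.Connected) (huni : G.edgeSet.ncard = Fintype.card V)
    (hc : c.IsCycle) {u : V} {d : G.Walk u u} (hd : d.IsCycle) : d.edges ⊆ c.edges := by
  intro e he
  by_contra hec
  induction e with
  | h a b =>
  have hab : G.Adj a b := d.adj_of_mem_edges he
  have htree : (G.deleteEdges {s(a, b)}).IsTree := by
    refine isTree_iff_connected_and_card.mpr
      ⟨hconn.connected_delete_edge_of_not_isBridge fun hbr => hbr.notMem_edges_of_isCycle hd he, ?_⟩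
    rw [edgeSet_deleteEdges, Nat.card_coe_set_eq,
      ncard_sdiff_singleton_add_one (G.mem_edgeSet.mpr hab), huni, Nat.card_eq_fintype_card]
  exact htree.isAcyclic _ (Walk.IsCycle.toDeleteEdges G {s(a, b)} hc
    fun e he' hab' => hec (mem_singleton_iff.mp hab' ▸ he'))

lemma support_subset_of_isCycle (hconn : G.Connected) (huni : G.edgeSet.ncard = Fintype.card V)
    (hc : c.IsCycle) {u : V} {d : G.Walk u u} (hd : d.IsCycle) : d.support ⊆ c.support := by
  intro z hz
  obtain ⟨e, he, hze⟩ := (Walk.mem_support_iff_exists_mem_edges_of_not_nil hd.not_nil).mp hz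
  exact (Walk.mem_support_iff_exists_mem_edges_of_not_nil hc.not_nil).mpr
    ⟨e, edges_subset_of_isCycle hconn huni hc hd he, hze⟩

lemma isAcyclic_induce_of_notMem (hconn : G.Connected) (huni : G.edgeSet.ncard = Fintype.card V)
    (hc : c.IsCycle) {z : V} (hz : z ∈ c.support) (hzA : z ∉ A) : (G.induce A).IsAcyclic := by
  intro u d hd
  have hd' := hd.map (f := (Embedding.induce A).toHom) Subtype.val_injective
  obtain ⟨z', -, rfl⟩ := List.mem_map.mp
    (Walk.support_map _ d ▸ support_subset_of_isCycle hconn huni hd' hc hz)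
  exact hzA z'.2

lemma isBridge_of_notMem_support (hconn : G.Connected) (huni : G.edgeSet.ncard = Fintype.card V)
    (hc : c.IsCycle) {x y : V} (hx : x ∉ c.support) (hxy : G.Adj x y) : G.IsBridge s(x, y) :=
  (isBridge_iff_forall_cycle_notMem hxy).mpr fun _ d hd he =>
    hx (support_subset_of_isCycle hconn huni hc hd (d.fst_mem_support_of_mem_edges he))

lemma notMem_coreOn_univ_of_mem_support (hconn : G.Connected)
    (huni : G.edgeSet.ncard = Fintype.card V) (hc : c.IsCycle)
    (hαμ : indepNumOn G univ + matchNum G + 1 ≤ Nat.card V) {w : V} (hw : w ∈ c.support) :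
    w ∉ coreOn G univ :=
  notMem_coreOn_univ_of_isAcyclic hαμ
    (isAcyclic_induce_of_notMem hconn huni hc hw (notMem_compl_iff.mpr rfl))

lemma coreOn_univ_inter_treeCompVerts (hconn : G.Connected)
    (huni : G.edgeSet.ncard = Fintype.card V) (hc : c.IsCycle)
    (hαμ : indepNumOn G univ + matchNum G + 1 ≤ Nat.card V) {x y : V} (hx : x ∉ c.support)
    (hy : y ∈ c.support) (hxy : G.Adj x y) :
    coreOn G univ ∩ treeCompVerts G x y = Subtype.val '' core (treeComp G x y) := by
  have hyT := notMem_treeCompVerts_of_isBridge (isBridge_of_notMem_support hconn huni hc hx hxy)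
  rw [treeComp_eq_induce hyT, image_core_induce]
  refine coreOn_univ_inter_eq (eq_and_eq_of_adj_of_mem_treeCompVerts hyT)
    (indepNumOn_le_add_of_isAcyclic hαμ rfl hyT hxy ?_ ?_)
  · exact isAcyclic_induce_of_notMem hconn huni hc hy fun h => hyT h.1
  · exact isAcyclic_induce_of_notMem hconn huni hc hy fun h => h.2 rfl

end Unicyclic

end UnicyclicCore

open UnicyclicCore Set in
theorem stmt18 {V : Type*} [Fintype V] (G : SimpleGraph V)
    (hconn : G.Connected) (huni : G.edgeSet.ncard = Fintype.card V)
    {v : V} (c : G.Walk v v) (hc : c.IsCycle)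
    (hsum : indepNum G + matchNum G = Fintype.card V - 1) :
    core G = {w : V | ∃ x y : V, x ∉ c.support ∧ y ∈ c.support ∧ G.Adj x y ∧
      w ∈ Subtype.val '' core (treeComp G x y)} := by
  have hαμ : indepNumOn G univ + matchNum G + 1 ≤ Nat.card V := by
    have := Fintype.card_pos_iff.mpr ⟨v⟩
    rw [← indepNum_eq_indepNumOn_univ, Nat.card_eq_fintype_card]
    omega
  ext w
  rw [core_eq_coreOn_univ]
  constructor
  · intro hw
    have hwc : w ∉ c.support := fun h => notMem_coreOn_univ_of_mem_support hconn huni hc hαμ h hw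
    obtain ⟨x, hx, y, hy, hxy, hwx⟩ := exists_adj_reachable_deleteEdges {z | z ∈ c.support}
      (hconn w v).some hwc c.start_mem_support
    refine ⟨x, y, hx, hy, hxy, ?_⟩
    rw [← coreOn_univ_inter_treeCompVerts hconn huni hc hαμ hx hy hxy]
    exact ⟨hw, SimpleGraph.ConnectedComponent.eq.mpr hwx⟩
  · rintro ⟨x, y, hx, hy, hxy, hw⟩
    rw [← coreOn_univ_inter_treeCompVerts hconn huni hc hαμ hx hy hxy] at hw
    exact hw.1
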